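/- arXiv:2409.02089 — 9 statements merged into one kernel-verified Lean document; each statement's English description precedes it below -/
import Mathlib

section
/- Let n be a positive integer, J an n×n complex positive semidefinite matrix, and σ ∈ ℝⁿ with σᵢ ≥ 0 for all i; let Σ = diag(σ). Then the matrix I + ΣJΣ is positive definite, its determinant is a real number satisfying det(I + ΣJΣ) ≤ ∏ᵢ₌₁ⁿ (1 + σᵢ² Jᵢᵢ), and the diagonal matrix D = diag(J₁₁, …, Jₙₙ) is positive semidefinite with Tr(D) = Tr(J) and det(I + ΣDΣ) = ∏ᵢ₌₁ⁿ (1 + σᵢ² Jᵢᵢ). Consequently, for every P > 0, the supremum of det(I + ΣJΣ) over positive semidefinite J with Tr(J) ≤ P equals the supremum over diagonal positive semidefinite J with Tr(J) ≤ P. -/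
/-!
Hadamard's inequality: conjugating a positive definite `A` by `diagonal (A i i)^(-1/2)` gives a
positive semidefinite matrix with unit diagonal, whose eigenvalues `λ` sum to the dimension; as
`λ ≤ exp (λ - 1)`, their product, the determinant, is at most `1`.

The diagonal of `1 + Σ K Σ` is `1 + σ i ^ 2 * K i i`, so replacing a covariance `K` by its
diagonal keeps it positive semidefinite with the same trace and does not decrease the
determinant; hence the two suprema agree.
-/

open Matrix BigOperators ComplexOrder

namespace Matrix

variable {𝕜 ι : Type*} [RCLike 𝕜] [Fintype ι] [DecidableEq ι]

theorem PosSemidef.re_det_le_one_of_diag_eq_one {A : Matrix ι ι 𝕜} (hA : A.PosSemidef)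
    (hdiag : ∀ i, A i i = 1) : RCLike.re A.det ≤ 1 := by
  set ev := hA.isHermitian.eigenvalues
  have hsum : ∑ i, ev i = Fintype.card ι := by
    apply RCLike.ofReal_injective (K := 𝕜)
    have := hA.isHermitian.trace_eq_sum_eigenvalues
    simp only [trace, diag, hdiag] at this
    push_cast
    simpa using this.symm
  calc RCLike.re A.det = ∏ i, ev i := by
        rw [hA.isHermitian.det_eq_prod_eigenvalues, ← RCLike.ofReal_prod, RCLike.ofReal_re]
    _ ≤ ∏ i, Real.exp (ev i - 1) :=
        Finset.prod_le_prod (fun i _ => hA.eigenvalues_nonneg i)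
          fun i _ => by linarith [Real.add_one_le_exp (ev i - 1)]
    _ = 1 := by
        rw [← Real.exp_sum, Finset.sum_sub_distrib, hsum]
        simp

theorem PosDef.re_det_le_prod_re_diag {A : Matrix ι ι 𝕜} (hA : A.PosDef) :
    RCLike.re A.det ≤ ∏ i, RCLike.re (A i i) := by
  set d : ι → ℝ := fun i => RCLike.re (A i i)
  have hd : ∀ i, 0 < d i := fun i => RCLike.pos_iff.mp hA.diag_pos |>.1
  have hAd : ∀ i, A i i = d i := fun i => (hA.isHermitian.coe_re_apply_self i).symm
  set T : Matrix ι ι 𝕜 := diagonal fun i => ((Real.sqrt (d i))⁻¹ : ℝ)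
  have hT : Tᴴ = T := by simp [T]
  have hB : (T * A * Tᴴ).PosSemidef := hA.posSemidef.mul_mul_conjTranspose_same T
  rw [hT] at hB
  have hBdiag : ∀ i, (T * A * T) i i = 1 := by
    intro i
    have hne : Real.sqrt (d i) ≠ 0 := (Real.sqrt_pos.mpr (hd i)).ne'
    simp only [T, mul_diagonal, diagonal_mul, hAd]
    rw [← RCLike.ofReal_mul, ← RCLike.ofReal_mul, ← RCLike.ofReal_one]
    congr 1
    field_simp
    exact (Real.sq_sqrt (hd i).le).symm
  have hBdet : RCLike.re (T * A * T).det = RCLike.re A.det / ∏ i, d i := by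
    have hT2 : T.det * T.det = ((∏ i, d i)⁻¹ : ℝ) := by
      simp only [T, det_diagonal, ← Finset.prod_mul_distrib, ← RCLike.ofReal_mul,
        ← RCLike.ofReal_prod, ← Finset.prod_inv_distrib]
      congr 1
      refine Finset.prod_congr rfl fun i _ => ?_
      rw [← mul_inv, Real.mul_self_sqrt (hd i).le]
    rw [det_mul, det_mul, mul_right_comm, hT2, div_eq_mul_inv, RCLike.re_ofReal_mul, mul_comm]
  have := hB.re_det_le_one_of_diag_eq_one hBdiag
  rw [hBdet, div_le_one (Finset.prod_pos fun i _ => hd i)] at this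
  exact this

variable (σ : ι → ℝ)

lemma PosSemidef.posDef_one_add_diagonal_mul_mul_diagonal {K : Matrix ι ι ℂ}
    (hK : K.PosSemidef) :
    (1 + diagonal (fun i => (σ i : ℂ)) * K * diagonal fun i => (σ i : ℂ)).PosDef := by
  have := hK.mul_mul_conjTranspose_same (diagonal fun i => (σ i : ℂ))
  rw [show (diagonal fun i => (σ i : ℂ))ᴴ = diagonal fun i => (σ i : ℂ) by simp] at this
  exact PosDef.one.add_posSemidef this

lemma PosSemidef.re_det_one_add_diagonal_mul_mul_diagonal_le {K : Matrix ι ι ℂ}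
    (hK : K.PosSemidef) :
    (1 + diagonal (fun i => (σ i : ℂ)) * K * diagonal fun i => (σ i : ℂ)).det.re
      ≤ ∏ i, (1 + σ i ^ 2 * (K i i).re) := by
  refine (hK.posDef_one_add_diagonal_mul_mul_diagonal σ).re_det_le_prod_re_diag.trans_eq
    (Finset.prod_congr rfl fun i _ => ?_)
  simp only [add_apply, one_apply_eq, mul_diagonal, diagonal_mul, RCLike.re_to_complex,
    Complex.add_re, Complex.one_re, Complex.re_mul_ofReal, Complex.re_ofReal_mul]
  ring

lemma det_one_add_diagonal_mul_diagonal_mul_diagonal (e : ι → ℝ) :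
    (1 + diagonal (fun i => (σ i : ℂ)) * diagonal (fun i => (e i : ℂ)) *
      diagonal fun i => (σ i : ℂ)).det = ((∏ i, (1 + σ i ^ 2 * e i) : ℝ) : ℂ) := by
  rw [diagonal_mul_diagonal, diagonal_mul_diagonal, ← diagonal_one, diagonal_add, det_diagonal]
  push_cast
  exact Finset.prod_congr rfl fun i _ => by ring

end Matrix

theorem stmt_0_general (n : ℕ)
    (J : Matrix (Fin n) (Fin n) ℂ) (hJ : J.PosSemidef)
    (σ : Fin n → ℝ) :
    let S : Matrix (Fin n) (Fin n) ℂ := Matrix.diagonal (fun i => (σ i : ℂ))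
    ((1 + S * J * S).PosDef)
    ∧ ((1 + S * J * S).det.im = 0)
    ∧ ((1 + S * J * S).det.re ≤ ∏ i, (1 + σ i ^ 2 * (J i i).re))
    ∧ (Matrix.diagonal (fun i => J i i)).PosSemidef
    ∧ (Matrix.diagonal (fun i => J i i)).trace = J.trace
    ∧ ((1 + S * Matrix.diagonal (fun i => J i i) * S).det
        = ((∏ i, (1 + σ i ^ 2 * (J i i).re) : ℝ) : ℂ))
    ∧ ∀ P : ℝ, 0 < P →
        sSup {x : ℝ | ∃ K : Matrix (Fin n) (Fin n) ℂ, K.PosSemidef ∧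
            K.trace.re ≤ P ∧ x = ((1 + S * K * S).det).re}
        = sSup {x : ℝ | ∃ d : Fin n → ℝ, (∀ i, 0 ≤ d i) ∧ (∑ i, d i) ≤ P ∧
            x = ((1 + S * (Matrix.diagonal (fun i => (d i : ℂ))) * S).det).re} := by
  intro S
  have hJdiag : (diagonal fun i => J i i) = diagonal fun i => ((J i i).re : ℂ) :=
    congrArg diagonal (funext fun i => (hJ.isHermitian.coe_re_apply_self i).symm)
  have hpd := hJ.posDef_one_add_diagonal_mul_mul_diagonal σ
  refine ⟨hpd, (Complex.pos_iff.mp hpd.det_pos).2.symm,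
    hJ.re_det_one_add_diagonal_mul_mul_diagonal_le σ, PosSemidef.diagonal fun _ => hJ.diag_nonneg,
    by simp [trace], by rw [hJdiag, det_one_add_diagonal_mul_diagonal_mul_diagonal], ?_⟩
  intro P _
  apply csSup_eq_csSup_of_forall_exists_le
  · rintro _ ⟨K, hK, hKtr, rfl⟩
    refine ⟨_, ⟨fun i => (K i i).re, fun i => (Complex.nonneg_iff.mp hK.diag_nonneg).1, ?_,
      rfl⟩, ?_⟩
    · simpa [trace, Complex.re_sum] using hKtr
    · rw [det_one_add_diagonal_mul_diagonal_mul_diagonal, Complex.ofReal_re]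
      exact hK.re_det_one_add_diagonal_mul_mul_diagonal_le σ
  · rintro _ ⟨d, hd, hdtr, rfl⟩
    refine ⟨_, ⟨diagonal fun i => (d i : ℂ), ?_, ?_, rfl⟩, le_rfl⟩
    · exact PosSemidef.diagonal fun i => Complex.zero_le_real.mpr (hd i)
    · simpa [trace] using hdtr

/-- Hadamard-inequality reduction of the MIMO Shannon-capacity
objective `det (I + Σ J Σ)` to diagonal covariances. -/
theorem stmt_0 (n : ℕ) (hn : 0 < n)
    (J : Matrix (Fin n) (Fin n) ℂ) (hJ : J.PosSemidef)
    (σ : Fin n → ℝ) (hσ : ∀ i, 0 ≤ σ i) :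
    let S : Matrix (Fin n) (Fin n) ℂ := Matrix.diagonal (fun i => (σ i : ℂ))
    ((1 + S * J * S).PosDef)
    ∧ ((1 + S * J * S).det.im = 0)
    ∧ ((1 + S * J * S).det.re ≤ ∏ i, (1 + σ i ^ 2 * (J i i).re))
    ∧ (Matrix.diagonal (fun i => J i i)).PosSemidef
    ∧ (Matrix.diagonal (fun i => J i i)).trace = J.trace
    ∧ ((1 + S * Matrix.diagonal (fun i => J i i) * S).det
        = ((∏ i, (1 + σ i ^ 2 * (J i i).re) : ℝ) : ℂ))
    ∧ ∀ P : ℝ, 0 < P →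
        sSup {x : ℝ | ∃ K : Matrix (Fin n) (Fin n) ℂ, K.PosSemidef ∧
            K.trace.re ≤ P ∧ x = ((1 + S * K * S).det).re}
        = sSup {x : ℝ | ∃ d : Fin n → ℝ, (∀ i, 0 ≤ d i) ∧ (∑ i, d i) ≤ P ∧
            x = ((1 + S * (Matrix.diagonal (fun i => (d i : ℂ))) * S).det).re} :=
  stmt_0_general n J hJ σ
end

section
/- Let A be an n×n Hermitian complex matrix that is indefinite in the sense that there exists a vector v with v†Av < 0, let H be a nonzero m×n complex matrix, and let P > 0. Then the optimization problem sup { log det(I + H J H†) : J positive semidefinite, Tr(AJ) ≤ P } is unbounded: for every M ∈ ℝ there exists an n×n positive semidefinite matrix J with Tr(AJ) ≤ P and log det(I + H J H†) > M. -/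
/-!
If `H h ≠ 0`, then `J = s (h h† + β v v†)` is positive semidefinite, and for `β ≥ 0` large
enough the negative direction `v` makes `Tr (A J) = s (h†Ah + β v†Av) ≤ 0`, whatever `s ≥ 0` is.
Meanwhile `det (I + H J H†) ≥ 1 + Tr (H J H†) ≥ 1 + s ‖H h‖²` (expand `∏ (1 + λᵢ)` over the
eigenvalues), which is unbounded as `s → ∞`.
-/

open Matrix ComplexOrder

theorem Finset.one_add_sum_le_prod_one_add {ι : Type*} (s : Finset ι) {f : ι → ℝ}
    (hf : ∀ i ∈ s, 0 ≤ f i) : 1 + ∑ i ∈ s, f i ≤ ∏ i ∈ s, (1 + f i) := by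
  classical
  induction s using Finset.induction_on with
  | empty => simp
  | insert a s ha ih =>
    rw [Finset.sum_insert ha, Finset.prod_insert ha]
    have hfa := hf a (Finset.mem_insert_self a s)
    have hsum : 0 ≤ ∑ i ∈ s, f i :=
      Finset.sum_nonneg fun i hi => hf i (Finset.mem_insert_of_mem hi)
    have := ih fun i hi => hf i (Finset.mem_insert_of_mem hi)
    nlinarith

theorem exists_nonneg_add_mul_nonpos (a : ℝ) {b : ℝ} (hb : b < 0) :
    ∃ β : ℝ, 0 ≤ β ∧ a + β * b ≤ 0 := by
  refine ⟨max 0 (a / -b), le_max_left _ _, ?_⟩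
  have := div_mul_cancel₀ a (neg_ne_zero.mpr hb.ne)
  nlinarith [le_max_right 0 (a / -b)]

namespace Matrix

variable {𝕜 m n : Type*} [RCLike 𝕜] [Fintype n]

lemma dotProduct_conjTranspose_mul_self_mulVec [Fintype m] (H : Matrix m n 𝕜) (x : n → 𝕜) :
    star x ⬝ᵥ (Hᴴ * H) *ᵥ x = star (H *ᵥ x) ⬝ᵥ H *ᵥ x := by
  rw [← mulVec_mulVec, dotProduct_mulVec, ← star_mulVec]

lemma re_trace_mul_smul_vecMulVec_add_smul (N : Matrix n n 𝕜) (s β : ℝ) (x y : n → 𝕜) :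
    RCLike.re (N * (s • (vecMulVec x (star x) + β • vecMulVec y (star y)))).trace =
      s * (RCLike.re (star x ⬝ᵥ N *ᵥ x) + β * RCLike.re (star y ⬝ᵥ N *ᵥ y)) := by
  rw [mul_smul_comm, mul_add, mul_smul_comm, trace_smul, trace_add, trace_smul, mul_vecMulVec,
    mul_vecMulVec, trace_vecMulVec, trace_vecMulVec, dotProduct_comm, dotProduct_comm (N *ᵥ y),
    RCLike.smul_re, map_add, RCLike.smul_re]

variable [DecidableEq n]

lemma exists_mulVec_ne_zero {R : Type*} [Semiring R] {H : Matrix m n R} (hH : H ≠ 0) :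
    ∃ x, H *ᵥ x ≠ 0 := by
  by_contra! h
  exact hH (ext_of_mulVec_single fun i => by rw [h, zero_mulVec])

lemma IsHermitian.det_one_add {B : Matrix n n 𝕜} (hB : B.IsHermitian) :
    (1 + B).det = ∏ i, (1 + (hB.eigenvalues i : 𝕜)) := by
  have h := hB.cfc_eq (1 + ·)
  rw [cfc_const_add _ _ _, cfc_id' ℝ B, map_one] at h
  simp [h, IsHermitian.cfc, -Unitary.conjStarAlgAut_apply]

lemma PosSemidef.one_add_re_trace_le_re_det_one_add {B : Matrix n n 𝕜} (hB : B.PosSemidef) :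
    1 + RCLike.re B.trace ≤ RCLike.re (1 + B).det := by
  rw [hB.isHermitian.det_one_add, hB.isHermitian.trace_eq_sum_eigenvalues]
  norm_cast
  exact Finset.univ.one_add_sum_le_prod_one_add fun i _ => hB.eigenvalues_nonneg i

end Matrix

theorem stmt_4_general (n m : ℕ) (A : Matrix (Fin n) (Fin n) ℂ)
    (v : Fin n → ℂ) (hv : (star v ⬝ᵥ A *ᵥ v).re < 0)
    (H : Matrix (Fin m) (Fin n) ℂ) (hH : H ≠ 0) (P : ℝ) (hP : 0 < P) :
    ∀ M : ℝ, ∃ J : Matrix (Fin n) (Fin n) ℂ, J.PosSemidef ∧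
      ((A * J).trace).re ≤ P ∧ M < Real.log ((1 + H * J * Hᴴ).det.re) := by
  intro M
  obtain ⟨h, hHh⟩ := exists_mulVec_ne_zero hH
  have hc : 0 < (star (H *ᵥ h) ⬝ᵥ H *ᵥ h).re :=
    (Complex.pos_iff.mp (dotProduct_star_self_pos_iff.mpr hHh)).1
  obtain ⟨β, hβ, hAβ⟩ := exists_nonneg_add_mul_nonpos (star h ⬝ᵥ A *ᵥ h).re hv
  set K := vecMulVec h (star h) + β • vecMulVec v (star v)
  have hK : K.PosSemidef :=
    (posSemidef_vecMulVec_self_star h).add ((posSemidef_vecMulVec_self_star v).smul hβ)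
  set s := Real.exp M / (star (H *ᵥ h) ⬝ᵥ H *ᵥ h).re
  have hs : 0 ≤ s := by positivity
  refine ⟨s • K, hK.smul hs, ?_, ?_⟩
  · exact (re_trace_mul_smul_vecMulVec_add_smul A s β h v).trans_le
      ((mul_nonpos_of_nonneg_of_nonpos hs hAβ).trans hP.le)
  · have hdet := (hK.smul hs).mul_mul_conjTranspose_same H |>.one_add_re_trace_le_re_det_one_add
    rw [trace_mul_cycle, re_trace_mul_smul_vecMulVec_add_smul,
      dotProduct_conjTranspose_mul_self_mulVec, dotProduct_conjTranspose_mul_self_mulVec] at hdet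
    have hd : 0 ≤ (star (H *ᵥ v) ⬝ᵥ H *ᵥ v).re :=
      (Complex.nonneg_iff.mp (dotProduct_star_self_nonneg _)).1
    have hexp : Real.exp M < (1 + H * (s • K) * Hᴴ).det.re := calc
      Real.exp M = s * (star (H *ᵥ h) ⬝ᵥ H *ᵥ h).re := (div_mul_cancel₀ _ hc.ne').symm
      _ < 1 + s * ((star (H *ᵥ h) ⬝ᵥ H *ᵥ h).re + β * (star (H *ᵥ v) ⬝ᵥ H *ᵥ v).re) := by
        linarith [mul_nonneg hs (mul_nonneg hβ hd)]
      _ ≤ _ := hdet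
    exact (Real.lt_log_iff_exp_lt ((Real.exp_pos M).trans hexp)).mpr hexp

/-- If the Hermitian constraint matrix `A` is indefinite (some
`v` has `v† A v < 0`) and `H ≠ 0`, then `sup { log det (I + H J Hᴴ) : J ⪰ 0,
Tr (A J) ≤ P }` is unbounded above. -/
theorem stmt_4 (n m : ℕ) (A : Matrix (Fin n) (Fin n) ℂ) (hA : A.IsHermitian)
    (v : Fin n → ℂ) (hv : (star v ⬝ᵥ A *ᵥ v).re < 0)
    (H : Matrix (Fin m) (Fin n) ℂ) (hH : H ≠ 0) (P : ℝ) (hP : 0 < P) :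
    ∀ M : ℝ, ∃ J : Matrix (Fin n) (Fin n) ℂ, J.PosSemidef ∧
      ((A * J).trace).re ≤ P ∧ M < Real.log ((1 + H * J * Hᴴ).det.re) :=
  stmt_4_general n m A v hv H hH P hP
end

section
/- (Equal supports at the optimum.) Let n ≥ 1 be an integer and γ > 0. If (x*, y*) ∈ Δₙ × Δₙ is a global maximizer of f(x,y) = Σᵢ₌₁ⁿ log(1 + γ xᵢ yᵢ) over Δₙ × Δₙ, then the support sets of x* and y* coincide: for every index i, xᵢ* > 0 if and only if yᵢ* > 0. -/
/-!
If `x` charges an index `i` where `y` vanishes, the term `log (1 + γ xᵢ yᵢ)` is `0` whatever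
`xᵢ` is, so shifting the mass `xᵢ` to an index `j` with `yⱼ > 0` strictly increases the
objective. Hence at a maximizer `supp x ⊆ supp y`, and the reverse inclusion follows since the
objective is symmetric in `x` and `y`.
-/

open Finset

noncomputable section

variable {ι : Type*}

def waterFillingObjective [Fintype ι] (γ : ℝ) (x y : ι → ℝ) : ℝ :=
  ∑ i, Real.log (1 + γ * x i * y i)

lemma waterFillingObjective_comm [Fintype ι] (γ : ℝ) (x y : ι → ℝ) :
    waterFillingObjective γ x y = waterFillingObjective γ y x := by
  unfold waterFillingObjective
  exact sum_congr rfl fun k _ => by ring_nf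

def transferMass [DecidableEq ι] (x : ι → ℝ) (i j : ι) : ι → ℝ :=
  x + Pi.single j (x i) - Pi.single i (x i)

lemma transferMass_apply_of_ne [DecidableEq ι] {x : ι → ℝ} {i j k : ι} (hk : k ≠ i) :
    transferMass x i j k = x k + (Pi.single j (x i) : ι → ℝ) k := by
  simp [transferMass, Pi.single_apply, hk]

lemma transferMass_mul_of_eq_zero [DecidableEq ι] {x y : ι → ℝ} {i : ι} (hyi : y i = 0)
    (j k : ι) :
    transferMass x i j k * y k = x k * y k + (Pi.single j (x i) : ι → ℝ) k * y k := by
  by_cases hk : k = i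
  · subst hk
    simp [hyi]
  · rw [transferMass_apply_of_ne hk, add_mul]

variable [Fintype ι] [DecidableEq ι]

lemma transferMass_mem_stdSimplex {x : ι → ℝ} (hx : x ∈ stdSimplex ℝ ι) {i j : ι}
    (hij : i ≠ j) : transferMass x i j ∈ stdSimplex ℝ ι := by
  refine ⟨fun k => ?_, ?_⟩
  · by_cases hk : k = i
    · subst hk
      simp [transferMass, hij]
    · rw [transferMass_apply_of_ne hk]
      exact add_nonneg (hx.1 k) ((Pi.single_nonneg.2 (hx.1 i) : (0 : ι → ℝ) ≤ _) k)
  · simp only [transferMass, Pi.sub_apply, Pi.add_apply, sum_sub_distrib, sum_add_distrib,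
      sum_pi_single', mem_univ, if_true, hx.2]
    ring

lemma waterFillingObjective_lt_transferMass {γ : ℝ} (hγ : 0 < γ) {x y : ι → ℝ}
    (hx : ∀ k, 0 ≤ x k) (hy : ∀ k, 0 ≤ y k) {i j : ι} (hxi : 0 < x i) (hyi : y i = 0)
    (hyj : 0 < y j) :
    waterFillingObjective γ x y < waterFillingObjective γ (transferMass x i j) y := by
  have hpos : ∀ k, 0 < 1 + γ * x k * y k := fun k => by
    have := mul_nonneg (mul_nonneg hγ.le (hx k)) (hy k)
    linarith
  have hterm : ∀ k, γ * transferMass x i j k * y k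
      = γ * x k * y k + γ * ((Pi.single j (x i) : ι → ℝ) k * y k) := fun k => by
    rw [mul_assoc, transferMass_mul_of_eq_zero hyi, mul_add, mul_assoc]
  unfold waterFillingObjective
  refine sum_lt_sum (fun k _ => Real.log_le_log (hpos k) ?_) ⟨j, mem_univ j, ?_⟩
  · have hsingle : (0 : ι → ℝ) ≤ Pi.single j (x i) := Pi.single_nonneg.2 hxi.le
    have := mul_nonneg (hsingle k) (hy k)
    rw [hterm]
    nlinarith
  · refine Real.log_lt_log (hpos j) ?_
    rw [hterm, Pi.single_eq_same]
    nlinarith [mul_pos hγ (mul_pos hxi hyj)]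

lemma pos_of_isMaxOn_waterFillingObjective {γ : ℝ} (hγ : 0 < γ) {x y : ι → ℝ}
    (hx : x ∈ stdSimplex ℝ ι) (hy : y ∈ stdSimplex ℝ ι)
    (hmax : IsMaxOn (fun u => waterFillingObjective γ u y) (stdSimplex ℝ ι) x) {i : ι}
    (hxi : 0 < x i) : 0 < y i := by
  refine (hy.1 i).lt_of_ne fun hyi => ?_
  obtain ⟨j, -, hyj⟩ : ∃ j ∈ univ, 0 < y j :=
    exists_lt_of_sum_lt (f := fun _ => 0) (by simp [hy.2])
  have hij : i ≠ j := by rintro rfl; exact hyj.ne hyi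
  exact (waterFillingObjective_lt_transferMass hγ hx.1 hy.1 hxi hyi.symm hyj).not_ge
    (hmax (transferMass_mem_stdSimplex hx hij))

end

theorem stmt_8_general (n : ℕ) (γ : ℝ) (hγ : 0 < γ)
    (x y : Fin n → ℝ)
    (hx0 : ∀ i, 0 ≤ x i) (hx1 : ∑ i, x i = 1)
    (hy0 : ∀ i, 0 ≤ y i) (hy1 : ∑ i, y i = 1)
    (hmax : ∀ u v : Fin n → ℝ, (∀ i, 0 ≤ u i) → (∑ i, u i = 1) →
      (∀ i, 0 ≤ v i) → (∑ i, v i = 1) →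
      ∑ i, Real.log (1 + γ * u i * v i) ≤ ∑ i, Real.log (1 + γ * x i * y i)) :
    ∀ i, 0 < x i ↔ 0 < y i := by
  have hx : x ∈ stdSimplex ℝ (Fin n) := ⟨hx0, hx1⟩
  have hy : y ∈ stdSimplex ℝ (Fin n) := ⟨hy0, hy1⟩
  have hmax_x : IsMaxOn (fun u => waterFillingObjective γ u y) (stdSimplex ℝ _) x :=
    isMaxOn_iff.2 fun u hu => hmax u y hu.1 hu.2 hy0 hy1
  have hmax_y : IsMaxOn (fun v => waterFillingObjective γ v x) (stdSimplex ℝ _) y :=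
    isMaxOn_iff.2 fun v hv => by
      rw [waterFillingObjective_comm γ v, waterFillingObjective_comm γ y]
      exact hmax x v hx0 hx1 hv.1 hv.2
  exact fun i => ⟨pos_of_isMaxOn_waterFillingObjective hγ hx hy hmax_x,
    pos_of_isMaxOn_waterFillingObjective hγ hy hx hmax_y⟩

/-- Equal supports at the optimum of the generalized
water-filling problem: at a global maximizer `(x, y)` of
`Σ log (1 + γ xᵢ yᵢ)` over the product of probability simplices,
`xᵢ > 0 ↔ yᵢ > 0`. -/
theorem stmt_8 (n : ℕ) (hn : 1 ≤ n) (γ : ℝ) (hγ : 0 < γ)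
    (x y : Fin n → ℝ)
    (hx0 : ∀ i, 0 ≤ x i) (hx1 : ∑ i, x i = 1)
    (hy0 : ∀ i, 0 ≤ y i) (hy1 : ∑ i, y i = 1)
    (hmax : ∀ u v : Fin n → ℝ, (∀ i, 0 ≤ u i) → (∑ i, u i = 1) →
      (∀ i, 0 ≤ v i) → (∑ i, v i = 1) →
      ∑ i, Real.log (1 + γ * u i * v i) ≤ ∑ i, Real.log (1 + γ * x i * y i)) :
    ∀ i, 0 < x i ↔ 0 < y i :=
  stmt_8_general n γ hγ x y hx0 hx1 hy0 hy1 hmax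
end

section
/- (Pairwise optimality conditions.) Let n ≥ 1 be an integer and γ > 0, and let (x*, y*) ∈ Δₙ × Δₙ be a global maximizer of f(x,y) = Σᵢ₌₁ⁿ log(1 + γ xᵢ yᵢ) over Δₙ × Δₙ. Then for every pair of indices i ≠ j with xᵢ*, xⱼ*, yᵢ*, yⱼ* all positive, at least one of the following holds: (1) γ² xᵢ* yᵢ* xⱼ* yⱼ* = 1, or (2) xᵢ* = xⱼ*. -/
/-!
At a maximizer, shifting mass `t` from `x j` to `x i` keeps `x` in the simplex for small `|t|`,
so the one-variable derivative at `t = 0` vanishes: `y i / A = y j / B`, where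
`A = 1 + γ x i y i` and `B = 1 + γ x j y j`. Exchanging the roles of `x` and `y` gives
`x i / A = x j / B`. Multiplying out, `(A - B) (γ² x i y i x j y j - 1) = 0`, and `A = B` together
with `x i B = x j A` forces `x i = x j`.
-/

open Finset Real

section StdSimplex

variable {ι : Type*} [Fintype ι] {x : ι → ℝ} {i j : ι} {t : ℝ}

theorem add_single_sub_single_mem_stdSimplex [DecidableEq ι] (hx : x ∈ stdSimplex ℝ ι)
    (hi : -x i ≤ t) (hj : t ≤ x j) : x + Pi.single i t - Pi.single j t ∈ stdSimplex ℝ ι := by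
  refine ⟨fun k => ?_, ?_⟩
  · simp only [Pi.add_apply, Pi.sub_apply, Pi.single_apply]
    split_ifs <;> subst_vars <;> linarith [hx.1 k]
  · simp [sum_add_distrib, sum_sub_distrib, hx.2]

theorem sum_apply_add_single_sub_single [DecidableEq ι] (g : ι → ℝ → ℝ) (hij : i ≠ j) :
    ∑ k, g k ((x + Pi.single i t - Pi.single j t : ι → ℝ) k) - ∑ k, g k (x k) =
      (g i (x i + t) - g i (x i)) + (g j (x j - t) - g j (x j)) := by
  rw [← sum_sub_distrib, Fintype.sum_eq_add i j hij]
  · simp [hij, hij.symm]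
  · rintro k ⟨hki, hkj⟩
    simp [hki, hkj]

theorem eq_of_isMaxOn_sum_stdSimplex {g : ι → ℝ → ℝ} {a b : ℝ} (hx : x ∈ stdSimplex ℝ ι)
    (hmax : IsMaxOn (fun u => ∑ k, g k (u k)) (stdSimplex ℝ ι) x) (hij : i ≠ j)
    (hi : 0 < x i) (hj : 0 < x j) (ha : HasDerivAt (g i) a (x i))
    (hb : HasDerivAt (g j) b (x j)) : a = b := by
  classical
  let ψ : ℝ → ℝ := fun t => g i (x i + t) + g j (x j - t)
  have hψ : HasDerivAt ψ (a - b) 0 := by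
    rw [← add_zero (x i)] at ha
    rw [← sub_zero (x j)] at hb
    rw [sub_eq_add_neg]
    exact (ha.comp_const_add _ _).fun_add (hb.comp_const_sub _ _)
  have hloc : IsLocalMax ψ 0 := by
    filter_upwards [Ioo_mem_nhds (neg_lt_zero.2 hi) hj] with t ht
    have hle := isMaxOn_iff.1 hmax _ (add_single_sub_single_mem_stdSimplex hx ht.1.le ht.2.le)
    have hdiff := sum_apply_add_single_sub_single (x := x) (t := t) g hij
    simp only [ψ, add_zero, sub_zero]
    linarith
  exact sub_eq_zero.1 (hloc.hasDerivAt_eq_zero hψ)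

theorem div_eq_div_of_isMaxOn_sum_log_one_add_mul {c : ι → ℝ} (hc : ∀ k, 0 ≤ c k)
    (hx : x ∈ stdSimplex ℝ ι)
    (hmax : IsMaxOn (fun u => ∑ k, log (1 + c k * u k)) (stdSimplex ℝ ι) x) (hij : i ≠ j)
    (hi : 0 < x i) (hj : 0 < x j) : c i / (1 + c i * x i) = c j / (1 + c j * x j) := by
  have hderiv (k : ι) :
      HasDerivAt (fun s => log (1 + c k * s)) (c k / (1 + c k * x k)) (x k) := by
    have h := ((hasDerivAt_id (x k)).const_mul (c k)).const_add 1
    rw [mul_one] at h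
    exact h.log (by have := hc k; have := hx.1 k; positivity)
  exact eq_of_isMaxOn_sum_stdSimplex (g := fun k s => log (1 + c k * s)) hx hmax hij hi hj
    (hderiv i) (hderiv j)

end StdSimplex

theorem sq_mul_eq_one_or_eq_of_div_eq_div {γ x₁ x₂ y₁ y₂ : ℝ} (hγ : 0 < γ) (hx₁ : 0 ≤ x₁)
    (hx₂ : 0 ≤ x₂) (hy₁ : 0 ≤ y₁) (hy₂ : 0 ≤ y₂)
    (hy : γ * y₁ / (1 + γ * y₁ * x₁) = γ * y₂ / (1 + γ * y₂ * x₂))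
    (hx : γ * x₁ / (1 + γ * x₁ * y₁) = γ * x₂ / (1 + γ * x₂ * y₂)) :
    γ ^ 2 * (x₁ * y₁ * x₂ * y₂) = 1 ∨ x₁ = x₂ := by
  rw [div_eq_div_iff (by positivity) (by positivity)] at hx hy
  have ey : y₁ * (1 + γ * x₂ * y₂) = y₂ * (1 + γ * x₁ * y₁) :=
    mul_left_cancel₀ hγ.ne' (by linear_combination hy)
  have ex : x₁ * (1 + γ * x₂ * y₂) = x₂ * (1 + γ * x₁ * y₁) :=
    mul_left_cancel₀ hγ.ne' (by linear_combination hx)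
  by_cases hA : γ * x₁ * y₁ = γ * x₂ * y₂
  · right
    rw [hA] at ex
    exact mul_right_cancel₀ (by positivity) ex
  · left
    have hfactor : (γ * x₁ * y₁ - γ * x₂ * y₂) * (γ ^ 2 * (x₁ * y₁ * x₂ * y₂) - 1) = 0 := by
      linear_combination (-γ * x₁ * (1 + γ * x₂ * y₂)) * ey - (γ * y₂ * (1 + γ * x₁ * y₁)) * ex
    simpa [sub_eq_zero, hA] using hfactor

theorem stmt_9_general (n : ℕ) (γ : ℝ) (hγ : 0 < γ)
    (x y : Fin n → ℝ)
    (hx0 : ∀ i, 0 ≤ x i) (hx1 : ∑ i, x i = 1)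
    (hy0 : ∀ i, 0 ≤ y i) (hy1 : ∑ i, y i = 1)
    (hmax : ∀ u v : Fin n → ℝ, (∀ i, 0 ≤ u i) → (∑ i, u i = 1) →
      (∀ i, 0 ≤ v i) → (∑ i, v i = 1) →
      ∑ i, Real.log (1 + γ * u i * v i) ≤ ∑ i, Real.log (1 + γ * x i * y i)) :
    ∀ i j : Fin n, i ≠ j → 0 < x i → 0 < x j → 0 < y i → 0 < y j →
      γ ^ 2 * (x i * y i * x j * y j) = 1 ∨ x i = x j := by
  intro i j hij hxi hxj hyi hyj
  have hcomm (v : Fin n → ℝ) :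
      ∑ k, log (1 + γ * y k * v k) = ∑ k, log (1 + γ * v k * y k) :=
    sum_congr rfl fun k _ => by rw [mul_right_comm]
  have hmax_x : IsMaxOn (fun u => ∑ k, log (1 + γ * y k * u k)) (stdSimplex ℝ (Fin n)) x :=
    isMaxOn_iff.2 fun u hu => by
      rw [hcomm, hcomm]
      exact hmax u y hu.1 hu.2 hy0 hy1
  have hmax_y : IsMaxOn (fun v => ∑ k, log (1 + γ * x k * v k)) (stdSimplex ℝ (Fin n)) y :=
    fun v hv => hmax x v hx0 hx1 hv.1 hv.2
  have hc (z : Fin n → ℝ) (hz : ∀ k, 0 ≤ z k) (k : Fin n) : 0 ≤ γ * z k := by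
    have := hz k
    positivity
  exact sq_mul_eq_one_or_eq_of_div_eq_div hγ hxi.le hxj.le hyi.le hyj.le
    (div_eq_div_of_isMaxOn_sum_log_one_add_mul (hc y hy0) ⟨hx0, hx1⟩ hmax_x hij hxi hxj)
    (div_eq_div_of_isMaxOn_sum_log_one_add_mul (hc x hx0) ⟨hy0, hy1⟩ hmax_y hij hyi hyj)

/-- Pairwise KKT optimality conditions at a global maximizer of
`Σ log (1 + γ xᵢ yᵢ)` over the product of probability simplices: for `i ≠ j`
with all four entries positive, either `γ² xᵢ yᵢ xⱼ yⱼ = 1` or `xᵢ = xⱼ`. -/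
theorem stmt_9 (n : ℕ) (hn : 1 ≤ n) (γ : ℝ) (hγ : 0 < γ)
    (x y : Fin n → ℝ)
    (hx0 : ∀ i, 0 ≤ x i) (hx1 : ∑ i, x i = 1)
    (hy0 : ∀ i, 0 ≤ y i) (hy1 : ∑ i, y i = 1)
    (hmax : ∀ u v : Fin n → ℝ, (∀ i, 0 ≤ u i) → (∑ i, u i = 1) →
      (∀ i, 0 ≤ v i) → (∑ i, v i = 1) →
      ∑ i, Real.log (1 + γ * u i * v i) ≤ ∑ i, Real.log (1 + γ * x i * y i)) :
    ∀ i j : Fin n, i ≠ j → 0 < x i → 0 < x j → 0 < y i → 0 < y j →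
      γ ^ 2 * (x i * y i * x j * y j) = 1 ∨ x i = x j :=
  stmt_9_general n γ hγ x y hx0 hx1 hy0 hy1 hmax
end

section
/- (Symmetry of the optimum.) Let n ≥ 1 be an integer and γ > 0. If (x*, y*) ∈ Δₙ × Δₙ is a global maximizer of f(x,y) = Σᵢ₌₁ⁿ log(1 + γ xᵢ yᵢ) over Δₙ × Δₙ, then x* = y*, i.e., xᵢ* = yᵢ* for every index i. -/
/-!
Replacing both `x` and `y` by their midpoint `z` keeps the point in `Δₙ × Δₙ` (the simplex is
convex) and, by AM–GM `xᵢ yᵢ ≤ zᵢ²` with equality iff `xᵢ = yᵢ`, strictly increases every term of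
the objective at a coordinate where `xᵢ ≠ yᵢ` without decreasing the others. So a maximizer
has `x = y`.
-/

open Real Finset

lemma mul_le_midpoint_mul_self (a b : ℝ) : a * b ≤ midpoint ℝ a b * midpoint ℝ a b := by
  rw [midpoint_eq_smul_add, smul_eq_mul, invOf_eq_inv]
  nlinarith [sq_nonneg (a - b)]

lemma mul_lt_midpoint_mul_self {a b : ℝ} (hab : a ≠ b) :
    a * b < midpoint ℝ a b * midpoint ℝ a b := by
  rw [midpoint_eq_smul_add, smul_eq_mul, invOf_eq_inv]
  nlinarith [sq_pos_of_ne_zero (sub_ne_zero.2 hab)]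

lemma log_one_add_mul_le_midpoint {γ a b : ℝ} (hγ : 0 ≤ γ) (ha : 0 ≤ a) (hb : 0 ≤ b) :
    log (1 + γ * a * b) ≤ log (1 + γ * midpoint ℝ a b * midpoint ℝ a b) := by
  have hab := mul_le_midpoint_mul_self a b
  apply log_le_log (by positivity)
  nlinarith

lemma log_one_add_mul_lt_midpoint {γ a b : ℝ} (hγ : 0 < γ) (ha : 0 ≤ a) (hb : 0 ≤ b)
    (hab : a ≠ b) :
    log (1 + γ * a * b) < log (1 + γ * midpoint ℝ a b * midpoint ℝ a b) := by
  have hab := mul_lt_midpoint_mul_self hab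
  apply log_lt_log (by positivity)
  nlinarith

theorem sum_log_one_add_mul_lt_midpoint {ι : Type*} [Fintype ι] {γ : ℝ} (hγ : 0 < γ)
    {x y : ι → ℝ} (hx : ∀ i, 0 ≤ x i) (hy : ∀ i, 0 ≤ y i) (hxy : x ≠ y) :
    ∑ i, log (1 + γ * x i * y i) <
      ∑ i, log (1 + γ * midpoint ℝ x y i * midpoint ℝ x y i) := by
  obtain ⟨i, hi⟩ := Function.ne_iff.1 hxy
  exact sum_lt_sum (fun j _ => log_one_add_mul_le_midpoint hγ.le (hx j) (hy j))
    ⟨i, mem_univ i, log_one_add_mul_lt_midpoint hγ (hx i) (hy i) hi⟩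

theorem stmt_10_general (n : ℕ) (γ : ℝ) (hγ : 0 < γ)
    (x y : Fin n → ℝ)
    (hx0 : ∀ i, 0 ≤ x i) (hx1 : ∑ i, x i = 1)
    (hy0 : ∀ i, 0 ≤ y i) (hy1 : ∑ i, y i = 1)
    (hmax : ∀ u v : Fin n → ℝ, (∀ i, 0 ≤ u i) → (∑ i, u i = 1) →
      (∀ i, 0 ≤ v i) → (∑ i, v i = 1) →
      ∑ i, Real.log (1 + γ * u i * v i) ≤ ∑ i, Real.log (1 + γ * x i * y i)) :
    x = y := by
  by_contra hxy
  have hz : midpoint ℝ x y ∈ stdSimplex ℝ (Fin n) :=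
    (convex_stdSimplex ℝ (Fin n)).midpoint_mem ⟨hx0, hx1⟩ ⟨hy0, hy1⟩
  exact (hmax _ _ hz.1 hz.2 hz.1 hz.2).not_gt (sum_log_one_add_mul_lt_midpoint hγ hx0 hy0 hxy)

/-- Symmetry at the optimum: a global maximizer `(x, y)` of
`Σ log (1 + γ xᵢ yᵢ)` over the product of probability simplices has `x = y`. -/
theorem stmt_10 (n : ℕ) (hn : 1 ≤ n) (γ : ℝ) (hγ : 0 < γ)
    (x y : Fin n → ℝ)
    (hx0 : ∀ i, 0 ≤ x i) (hx1 : ∑ i, x i = 1)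
    (hy0 : ∀ i, 0 ≤ y i) (hy1 : ∑ i, y i = 1)
    (hmax : ∀ u v : Fin n → ℝ, (∀ i, 0 ≤ u i) → (∑ i, u i = 1) →
      (∀ i, 0 ≤ v i) → (∑ i, v i = 1) →
      ∑ i, Real.log (1 + γ * u i * v i) ≤ ∑ i, Real.log (1 + γ * x i * y i)) :
    x = y :=
  stmt_10_general n γ hγ x y hx0 hx1 hy0 hy1 hmax
end

section
/- (At most two distinct values at the optimum.) Let n ≥ 1 be an integer and γ > 0, and let (x*, y*) ∈ Δₙ × Δₙ be a global maximizer of f(x,y) = Σᵢ₌₁ⁿ log(1 + γ xᵢ yᵢ) over Δₙ × Δₙ. Then the set of distinct nonzero values taken by the entries of x*, namely {xᵢ* : xᵢ* > 0}, has cardinality at most 2. -/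
open BigOperators

/-!
A maximizer has `x = y`: replacing both by their midpoint increases every term, since
`x y < ((x + y) / 2) ^ 2` off the diagonal. On the diagonal, moving mass `t` from entry `j` to
entry `i` keeps us in the simplex, so `t ↦ g (xᵢ + t) + g (xⱼ - t)` with `g s = log (1 + γ s²)`
is maximal at `t = 0`; hence `g' (xᵢ) = g' (xⱼ)`, which factors as `(xᵢ - xⱼ) (1 - γ xᵢ xⱼ) = 0`.
Three distinct values cannot pairwise satisfy `γ a b = 1`.
-/

open Real Function

theorem Finset.card_le_two_of_mul_mul_eq_one {M : Type*} [CommMonoid M] (S : Finset M) (γ : M)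
    (h : ∀ a ∈ S, ∀ b ∈ S, a ≠ b → γ * a * b = 1) : S.card ≤ 2 := by
  by_contra! hS
  obtain ⟨a, ha, b, hb, c, hc, hab, hac, hbc⟩ := Finset.two_lt_card.mp hS
  apply hbc
  calc b = γ * a * c * b := by rw [h a ha c hc hac, one_mul]
    _ = γ * a * b * c := by ac_rfl
    _ = c := by rw [h a ha b hb hab, one_mul]

lemma one_add_mul_mul_self_pos {γ : ℝ} (hγ : 0 ≤ γ) (s : ℝ) : 0 < 1 + γ * s * s := by
  nlinarith [mul_nonneg hγ (mul_self_nonneg s)]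

lemma eq_or_mul_mul_eq_one_of_deriv_eq {γ a b : ℝ} (hγ : 0 < γ)
    (h : 2 * γ * a / (1 + γ * a * a) = 2 * γ * b / (1 + γ * b * b)) :
    a = b ∨ γ * a * b = 1 := by
  rw [div_eq_div_iff (one_add_mul_mul_self_pos hγ.le a).ne'
    (one_add_mul_mul_self_pos hγ.le b).ne'] at h
  have hfactor : 2 * γ * ((a - b) * (1 - γ * a * b)) = 0 := by linear_combination h
  rcases mul_eq_zero.mp ((mul_eq_zero.mp hfactor).resolve_left (by positivity)) with h | h
  · exact .inl (sub_eq_zero.mp h)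
  · exact .inr (sub_eq_zero.mp h).symm

lemma hasDerivAt_log_one_add_mul_self {γ : ℝ} (hγ : 0 ≤ γ) (s : ℝ) :
    HasDerivAt (fun s => log (1 + γ * s * s)) (2 * γ * s / (1 + γ * s * s)) s := by
  have hinner : HasDerivAt (fun s => 1 + γ * s * s) (2 * γ * s) s :=
    ((((hasDerivAt_id' s).const_mul γ).fun_mul (hasDerivAt_id' s)).const_add 1).congr_deriv
      (by ring)
  exact hinner.log (one_add_mul_mul_self_pos hγ s).ne'

lemma eq_or_mul_mul_eq_one_of_isLocalMax {γ a b : ℝ} (hγ : 0 < γ)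
    (h : IsLocalMax
      (fun t => log (1 + γ * (a + t) * (a + t)) + log (1 + γ * (b - t) * (b - t))) 0) :
    a = b ∨ γ * a * b = 1 := by
  have hderiv := ((hasDerivAt_log_one_add_mul_self hγ.le (a + 0)).comp_const_add a 0).add
    ((hasDerivAt_log_one_add_mul_self hγ.le (b - 0)).comp_const_sub b 0)
  rw [add_zero, sub_zero] at hderiv
  exact eq_or_mul_mul_eq_one_of_deriv_eq hγ (by linarith [h.hasDerivAt_eq_zero hderiv])

lemma sum_comp_update_update {ι : Type*} [Fintype ι] [DecidableEq ι] (F : ℝ → ℝ)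
    (x : ι → ℝ) {i j : ι} (hij : i ≠ j) (p q : ℝ) :
    ∑ k, F (update (update x i p) j q k) = ∑ k, F (x k) + (F p - F (x i)) + (F q - F (x j)) := by
  rw [add_assoc, ← sub_eq_iff_eq_add', ← Finset.sum_sub_distrib,
    Fintype.sum_eq_add i j hij fun k hk => by simp [hk.1, hk.2]]
  simp [update_of_ne hij]

section Simplex

variable {ι : Type*} [Fintype ι] {γ : ℝ}

lemma eq_of_forall_sum_log_one_add_mul_le (hγ : 0 < γ) {x y : ι → ℝ}
    (hx : x ∈ stdSimplex ℝ ι) (hy : y ∈ stdSimplex ℝ ι)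
    (hmax : ∀ u ∈ stdSimplex ℝ ι, ∀ v ∈ stdSimplex ℝ ι,
      ∑ i, log (1 + γ * u i * v i) ≤ ∑ i, log (1 + γ * x i * y i)) :
    x = y := by
  by_contra hne
  obtain ⟨k, hk⟩ := Function.ne_iff.mp hne
  set z : ι → ℝ := (1 / 2 : ℝ) • x + (1 / 2 : ℝ) • y
  have hz : z ∈ stdSimplex ℝ ι :=
    convex_stdSimplex ℝ ι hx hy (by norm_num) (by norm_num) (by norm_num)
  have hzi : ∀ i, z i = (x i + y i) / 2 := fun i => by
    simp only [z, Pi.add_apply, Pi.smul_apply, smul_eq_mul]; ring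
  have hprod : ∀ i, x i * y i ≤ z i * z i := fun i => by
    rw [hzi]; nlinarith [sq_nonneg (x i - y i)]
  have hprod_lt : x k * y k < z k * z k := by
    rw [hzi]; nlinarith [sq_pos_of_ne_zero (sub_ne_zero.mpr hk)]
  have hpos : ∀ i, 0 < 1 + γ * x i * y i := fun i => by
    have := hx.1 i; have := hy.1 i; positivity
  refine (hmax z hz z hz).not_gt (Finset.sum_lt_sum (fun i _ => ?_) ⟨k, Finset.mem_univ k, ?_⟩)
  · exact log_le_log (hpos i) (by nlinarith [hprod i])
  · exact log_lt_log (hpos k) (by nlinarith [hprod_lt])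

variable [DecidableEq ι]

lemma update_update_mem_stdSimplex {x : ι → ℝ} (hx : x ∈ stdSimplex ℝ ι) {i j : ι} (hij : i ≠ j)
    {t : ℝ} (hti : -x i ≤ t) (htj : t ≤ x j) :
    update (update x i (x i + t)) j (x j - t) ∈ stdSimplex ℝ ι := by
  refine ⟨fun k => ?_, ?_⟩
  · rcases eq_or_ne k j with rfl | hkj
    · simpa using htj
    rcases eq_or_ne k i with rfl | hki
    · simpa [update_of_ne hkj, neg_le_iff_add_nonneg'] using hti
    simpa [update_of_ne hkj, update_of_ne hki] using hx.1 k
  · have := sum_comp_update_update id x hij (x i + t) (x j - t)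
    simp only [id, hx.2] at this
    linarith

lemma isLocalMax_log_transfer {x : ι → ℝ} (hx : x ∈ stdSimplex ℝ ι)
    (hmax : ∀ u ∈ stdSimplex ℝ ι,
      ∑ k, log (1 + γ * u k * u k) ≤ ∑ k, log (1 + γ * x k * x k))
    {i j : ι} (hij : i ≠ j) (hi : 0 < x i) (hj : 0 < x j) :
    IsLocalMax
      (fun t => log (1 + γ * (x i + t) * (x i + t)) + log (1 + γ * (x j - t) * (x j - t))) 0 := by
  filter_upwards [Metric.ball_mem_nhds 0 (lt_min hi hj)] with t ht
  rw [Metric.mem_ball, Real.dist_eq, sub_zero, abs_lt, neg_lt, lt_min_iff, lt_min_iff] at ht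
  have hu := hmax _ (update_update_mem_stdSimplex hx hij (t := t) (by linarith) (by linarith))
  rw [sum_comp_update_update (fun s => log (1 + γ * s * s)) x hij] at hu
  simp only [add_zero, sub_zero]
  linarith

end Simplex

theorem stmt_11_general (n : ℕ) (γ : ℝ) (hγ : 0 < γ)
    (x y : Fin n → ℝ)
    (hx0 : ∀ i, 0 ≤ x i) (hx1 : ∑ i, x i = 1)
    (hy0 : ∀ i, 0 ≤ y i) (hy1 : ∑ i, y i = 1)
    (hmax : ∀ u v : Fin n → ℝ, (∀ i, 0 ≤ u i) → (∑ i, u i = 1) →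
      (∀ i, 0 ≤ v i) → (∑ i, v i = 1) →
      ∑ i, Real.log (1 + γ * u i * v i) ≤ ∑ i, Real.log (1 + γ * x i * y i)) :
    ((Finset.univ.filter (fun i => 0 < x i)).image x).card ≤ 2 := by
  have hmax' : ∀ u ∈ stdSimplex ℝ (Fin n), ∀ v ∈ stdSimplex ℝ (Fin n),
      ∑ i, log (1 + γ * u i * v i) ≤ ∑ i, log (1 + γ * x i * y i) :=
    fun u hu v hv => hmax u v hu.1 hu.2 hv.1 hv.2
  have hx : x ∈ stdSimplex ℝ (Fin n) := ⟨hx0, hx1⟩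
  obtain rfl := (eq_of_forall_sum_log_one_add_mul_le hγ hx ⟨hy0, hy1⟩ hmax').symm
  refine Finset.card_le_two_of_mul_mul_eq_one _ γ ?_
  simp only [Finset.mem_image, Finset.mem_filter, Finset.mem_univ, true_and]
  rintro _ ⟨i, hi, rfl⟩ _ ⟨j, hj, rfl⟩ hne
  have hij : i ≠ j := fun h => hne (congrArg y h)
  exact (eq_or_mul_mul_eq_one_of_isLocalMax hγ
    (isLocalMax_log_transfer hx (fun u hu => hmax' u hu u hu) hij hi hj)).resolve_left hne

/-- At a global maximizer `(x, y)` of `Σ log (1 + γ xᵢ yᵢ)` over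
the product of probability simplices, the entries of `x` take at most two
distinct nonzero values. -/
theorem stmt_11 (n : ℕ) (hn : 1 ≤ n) (γ : ℝ) (hγ : 0 < γ)
    (x y : Fin n → ℝ)
    (hx0 : ∀ i, 0 ≤ x i) (hx1 : ∑ i, x i = 1)
    (hy0 : ∀ i, 0 ≤ y i) (hy1 : ∑ i, y i = 1)
    (hmax : ∀ u v : Fin n → ℝ, (∀ i, 0 ≤ u i) → (∑ i, u i = 1) →
      (∀ i, 0 ≤ v i) → (∑ i, v i = 1) →
      ∑ i, Real.log (1 + γ * u i * v i) ≤ ∑ i, Real.log (1 + γ * x i * y i)) :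
    ((Finset.univ.filter (fun i => 0 < x i)).image x).card ≤ 2 :=
  stmt_11_general n γ hγ x y hx0 hx1 hy0 hy1 hmax
end

section
/- Define g : (0,∞) → ℝ by g(x) = x·log(1 + 1/x²). Then g has a unique local maximizer r on (0,∞); this r is also the global maximizer, i.e., g(r) = sup_{x>0} g(x), and r ∈ (0,1). Moreover, g is strictly concave on (0,1] (its second derivative g''(x) = 2x(x² − 1)/(x²(x² + 1)²) is negative for 0 < x < 1) and g is nonincreasing on [1,∞) (g'(x) ≤ 0 for x ≥ 1). -/
/-!
For `g x = x log (1 + 1/x²)`, the derivative `g' x = log (1 + 1/x²) - 2/(x² + 1)` strictly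
decreases on `(0, 1]`, where `g'' < 0`; it is positive at `e⁻¹` and negative on `[1, ∞)` because
`log (1 + t) < t`. Hence `g'` has a single zero `r ∈ (0, 1)`, positive before it and negative
after it: `g` increases up to `r` and decreases afterwards, so `r` is the global maximizer and the
only critical point.
-/

open Real Set

namespace CapacityBound

noncomputable def g (x : ℝ) : ℝ := x * log (1 + 1 / x ^ 2)

noncomputable def g' (x : ℝ) : ℝ := log (1 + 1 / x ^ 2) - 2 / (x ^ 2 + 1)

noncomputable def g'' (x : ℝ) : ℝ := 2 * x * (x ^ 2 - 1) / (x ^ 2 * (x ^ 2 + 1) ^ 2)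

variable {x r : ℝ}

lemma one_add_one_div_sq_pos : 0 < 1 + 1 / x ^ 2 := by positivity

lemma hasDerivAt_one_add_one_div_sq (hx : x ≠ 0) :
    HasDerivAt (fun y : ℝ => 1 + 1 / y ^ 2) (-2 / x ^ 3) x := by
  simp only [one_div]
  refine (((hasDerivAt_pow 2 x).inv (pow_ne_zero 2 hx)).const_add 1).congr_deriv ?_
  field_simp
  ring

lemma hasDerivAt_g (hx : x ≠ 0) : HasDerivAt g (g' x) x := by
  refine ((hasDerivAt_id' x).mul ((hasDerivAt_one_add_one_div_sq hx).log
    one_add_one_div_sq_pos.ne')).congr_deriv ?_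
  simp only [g']
  field_simp
  ring

lemma hasDerivAt_g' (hx : x ≠ 0) : HasDerivAt g' (g'' x) x := by
  refine (((hasDerivAt_one_add_one_div_sq hx).log one_add_one_div_sq_pos.ne').sub
    ((hasDerivAt_const x (2 : ℝ)).div ((hasDerivAt_pow 2 x).add_const 1)
      (by positivity))).congr_deriv ?_
  simp only [g'']
  field_simp
  ring

lemma deriv_g (hx : x ≠ 0) : deriv g x = g' x := (hasDerivAt_g hx).deriv

lemma deriv_deriv_g (hx : x ≠ 0) : deriv (deriv g) x = g'' x := by
  have h : deriv g =ᶠ[nhds x] g' := by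
    filter_upwards [eventually_ne_nhds hx] with y hy using deriv_g hy
  rw [h.deriv_eq, (hasDerivAt_g' hx).deriv]

lemma continuousOn_g : ContinuousOn g (Ioi 0) :=
  fun _ hx => (hasDerivAt_g (ne_of_gt hx)).continuousAt.continuousWithinAt

lemma continuousOn_g' : ContinuousOn g' (Ioi 0) :=
  fun _ hx => (hasDerivAt_g' (ne_of_gt hx)).continuousAt.continuousWithinAt

lemma g''_neg (hx₀ : 0 < x) (hx₁ : x < 1) : g'' x < 0 :=
  div_neg_of_neg_of_pos (by nlinarith) (by positivity)

lemma strictAntiOn_g' : StrictAntiOn g' (Ioc 0 1) := by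
  refine strictAntiOn_of_hasDerivWithinAt_neg (f' := g'') (convex_Ioc 0 1)
    (continuousOn_g'.mono Ioc_subset_Ioi_self) (fun x hx => ?_) (fun x hx => ?_)
  all_goals rw [interior_Ioc] at hx
  · exact (hasDerivAt_g' (ne_of_gt hx.1)).hasDerivWithinAt
  · exact g''_neg hx.1 hx.2

lemma g'_neg_of_one_le (hx : 1 ≤ x) : g' x < 0 := by
  have hlog : log (1 + 1 / x ^ 2) < 1 / x ^ 2 := by
    have ht : 0 < 1 / x ^ 2 := by positivity
    linarith [log_lt_sub_one_of_pos one_add_one_div_sq_pos (lt_add_of_pos_right 1 ht).ne']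
  have hfrac : 1 / x ^ 2 ≤ 2 / (x ^ 2 + 1) := by
    rw [div_le_div_iff₀ (by positivity) (by positivity)]
    nlinarith
  simp only [g']
  linarith

lemma g'_exp_neg_one_pos : 0 < g' (exp (-1)) := by
  have hlog : 2 < log (1 + 1 / exp (-1) ^ 2) := by
    calc (2 : ℝ) = log (1 / exp (-1) ^ 2) := by
          rw [one_div, log_inv, log_pow, log_exp]
          norm_num
      _ < log (1 + 1 / exp (-1) ^ 2) := log_lt_log (by positivity) (by linarith)
  have hfrac : 2 / (exp (-1) ^ 2 + 1) < 2 := by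
    rw [div_lt_iff₀ (by positivity)]
    nlinarith [exp_pos (-1), pow_pos (exp_pos (-1)) 2]
  simp only [g']
  linarith

lemma exists_g'_eq_zero : ∃ r ∈ Ioo (0 : ℝ) 1, g' r = 0 := by
  have hIVT := intermediate_value_Icc' (exp_lt_one_iff.mpr (by norm_num : (-1 : ℝ) < 0)).le
    (continuousOn_g'.mono fun y hy => (exp_pos (-1)).trans_le hy.1)
  obtain ⟨r, hr, hr0⟩ := hIVT ⟨(g'_neg_of_one_le le_rfl).le, g'_exp_neg_one_pos.le⟩
  refine ⟨r, ⟨(exp_pos (-1)).trans_le hr.1, hr.2.lt_of_ne ?_⟩, hr0⟩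
  rintro rfl
  exact (g'_neg_of_one_le le_rfl).ne hr0

lemma g'_pos_of_lt (hr : r ∈ Ioc (0 : ℝ) 1) (hr0 : g' r = 0) (hx₀ : 0 < x) (hxr : x < r) :
    0 < g' x :=
  hr0 ▸ strictAntiOn_g' ⟨hx₀, hxr.le.trans hr.2⟩ hr hxr

lemma g'_neg_of_lt (hr : r ∈ Ioc (0 : ℝ) 1) (hr0 : g' r = 0) (hrx : r < x) : g' x < 0 := by
  rcases le_or_gt x 1 with hx | hx
  · exact hr0 ▸ strictAntiOn_g' hr ⟨hr.1.trans hrx, hx⟩ hrx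
  · exact g'_neg_of_one_le hx.le

lemma eq_of_g'_eq_zero (hr : r ∈ Ioc (0 : ℝ) 1) (hr0 : g' r = 0) (hx₀ : 0 < x) (hx : g' x = 0) :
    x = r := by
  rcases lt_trichotomy x r with h | h | h
  · exact absurd hx (g'_pos_of_lt hr hr0 hx₀ h).ne'
  · exact h
  · exact absurd hx (g'_neg_of_lt hr hr0 h).ne

lemma monotoneOn_g (hr : r ∈ Ioc (0 : ℝ) 1) (hr0 : g' r = 0) : MonotoneOn g (Ioc 0 r) := by
  refine monotoneOn_of_hasDerivWithinAt_nonneg (f' := g') (convex_Ioc 0 r)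
    (continuousOn_g.mono Ioc_subset_Ioi_self) (fun x hx => ?_) (fun x hx => ?_)
  all_goals rw [interior_Ioc] at hx
  · exact (hasDerivAt_g (ne_of_gt hx.1)).hasDerivWithinAt
  · exact (g'_pos_of_lt hr hr0 hx.1 hx.2).le

lemma antitoneOn_g (hr : r ∈ Ioc (0 : ℝ) 1) (hr0 : g' r = 0) : AntitoneOn g (Ici r) := by
  refine antitoneOn_of_hasDerivWithinAt_nonpos (f' := g') (convex_Ici r)
    (continuousOn_g.mono fun y hy => hr.1.trans_le hy) (fun x hx => ?_) (fun x hx => ?_)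
  all_goals rw [interior_Ici] at hx
  · exact (hasDerivAt_g (ne_of_gt (hr.1.trans hx))).hasDerivWithinAt
  · exact (g'_neg_of_lt hr hr0 hx).le

lemma isMaxOn_g (hr : r ∈ Ioc (0 : ℝ) 1) (hr0 : g' r = 0) : IsMaxOn g (Ioi 0) r := by
  refine isMaxOn_iff.mpr fun x hx₀ => ?_
  rcases le_total x r with h | h
  · exact monotoneOn_g hr hr0 ⟨hx₀, h⟩ (right_mem_Ioc.mpr hr.1) h
  · exact antitoneOn_g hr hr0 self_mem_Ici h h

lemma g'_eq_zero_of_isLocalMaxOn (hx : 0 < x) (hmax : IsLocalMaxOn g (Ioi 0) x) : g' x = 0 :=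
  deriv_g hx.ne' ▸ (hmax.isLocalMax (Ioi_mem_nhds hx)).deriv_eq_zero

lemma strictConcaveOn_g : StrictConcaveOn ℝ (Ioc 0 1) g := by
  refine strictConcaveOn_of_deriv2_neg (convex_Ioc 0 1)
    (continuousOn_g.mono Ioc_subset_Ioi_self) fun x hx => ?_
  rw [interior_Ioc] at hx
  rw [Function.iterate_succ_apply, Function.iterate_one, deriv_deriv_g (ne_of_gt hx.1)]
  exact g''_neg hx.1 hx.2

end CapacityBound

open CapacityBound

/-- The function `g x = x log (1 + 1/x²)` has a unique local
maximizer `r` on `(0, ∞)`, which is also the global maximizer and lies in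
`(0, 1)`; moreover `g` is strictly concave on `(0, 1]` with
`g'' x = 2x(x² − 1)/(x²(x² + 1)²) < 0` for `0 < x < 1`, and `g` is
nonincreasing on `[1, ∞)`. -/
theorem stmt_12 :
    ∃ r : ℝ, r ∈ Set.Ioo (0 : ℝ) 1 ∧
      IsLocalMaxOn (fun x : ℝ => x * Real.log (1 + 1 / x ^ 2)) (Set.Ioi 0) r ∧
      (∀ x : ℝ, 0 < x →
        x * Real.log (1 + 1 / x ^ 2) ≤ r * Real.log (1 + 1 / r ^ 2)) ∧
      (∀ r' : ℝ, 0 < r' →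
        IsLocalMaxOn (fun x : ℝ => x * Real.log (1 + 1 / x ^ 2)) (Set.Ioi 0) r' →
        r' = r) ∧
      StrictConcaveOn ℝ (Set.Ioc (0 : ℝ) 1)
        (fun x : ℝ => x * Real.log (1 + 1 / x ^ 2)) ∧
      (∀ x : ℝ, 0 < x → x < 1 →
        deriv (deriv (fun x : ℝ => x * Real.log (1 + 1 / x ^ 2))) x
            = 2 * x * (x ^ 2 - 1) / (x ^ 2 * (x ^ 2 + 1) ^ 2) ∧
        deriv (deriv (fun x : ℝ => x * Real.log (1 + 1 / x ^ 2))) x < 0) ∧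
      AntitoneOn (fun x : ℝ => x * Real.log (1 + 1 / x ^ 2)) (Set.Ici 1) := by
  obtain ⟨r, hr, hr0⟩ := exists_g'_eq_zero
  have hr' : r ∈ Ioc (0 : ℝ) 1 := Ioo_subset_Ioc_self hr
  have hmax := isMaxOn_g hr' hr0
  refine ⟨r, hr, hmax.localize, isMaxOn_iff.mp hmax, fun r' hr'₀ hmax' => ?_, strictConcaveOn_g,
    fun x hx₀ hx₁ => ?_, (antitoneOn_g hr' hr0).mono (Ici_subset_Ici.mpr hr.2.le)⟩
  · exact eq_of_g'_eq_zero hr' hr0 hr'₀ (g'_eq_zero_of_isLocalMaxOn hr'₀ hmax')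
  · have h := deriv_deriv_g (ne_of_gt hx₀)
    exact ⟨h, h ▸ g''_neg hx₀ hx₁⟩
end

section
/- Define g : (0,∞) → ℝ by g(x) = x·log(1 + 1/x²). Then for every x ≥ 1 one has g(x/2) ≥ g(3x/4) ≥ g(x), and g is strictly decreasing on the interval [3x/4, x] (i.e., for 3x/4 ≤ u < v ≤ x, g(u) > g(v)). -/
/-!
Here `g' t = log (1 + 1/t²) - 2/(t² + 1)` and `g'' t = 2 (t² - 1) / (t (t² + 1)²)`.
With `u = 1/t²`, the bound `log z ≤ (z - z⁻¹)/2` (that is, `sinh (log z) ≥ log z`) at `z = 1 + u`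
gives `g' t ≤ u (u - 2) / (2 (1 + u)) < 0` as soon as `2 t² > 1`; so `g` is strictly decreasing on
`[3/4, ∞)`, which gives the last two claims. For the first, if `x/2 < 3/4` then `x/2` lies in
`[1/2, 3/4]`, where `g` is concave (`g'' ≤ 0` on `(0, 1]`), so `g (x/2) ≥ min (g (1/2)) (g (3/4))
= g (3/4) ≥ g (3x/4)`; here `g (3/4) ≤ g (1/2)` is `(25/9)³ ≤ 5²`.
-/

open Real Set

/-- The function `g x = x log (1 + 1/x²)` from the generalized water-filling
analysis. -/
noncomputable def gWF (x : ℝ) : ℝ := x * Real.log (1 + 1 / x ^ 2)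

noncomputable def gWFDeriv (t : ℝ) : ℝ := log (1 + 1 / t ^ 2) - 2 / (t ^ 2 + 1)

lemma log_le_half_sub_inv {y : ℝ} (hy : 1 ≤ y) : log y ≤ (y - y⁻¹) / 2 := by
  rw [← sinh_log (by linarith)]
  exact self_le_sinh_iff.2 (log_nonneg hy)

lemma hasDerivAt_one_add_one_div_sq {t : ℝ} (ht : t ≠ 0) :
    HasDerivAt (fun s : ℝ => 1 + 1 / s ^ 2) (-(2 * t) / (t ^ 2) ^ 2) t := by
  simpa [one_div] using ((hasDerivAt_pow 2 t).inv (pow_ne_zero 2 ht)).const_add 1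

lemma hasDerivAt_log_one_add_one_div_sq {t : ℝ} (ht : t ≠ 0) :
    HasDerivAt (fun s : ℝ => log (1 + 1 / s ^ 2)) (-(2 * t) / (t ^ 2) ^ 2 / (1 + 1 / t ^ 2)) t :=
  (hasDerivAt_one_add_one_div_sq ht).log (by positivity)

lemma hasDerivAt_gWF {t : ℝ} (ht : t ≠ 0) : HasDerivAt gWF (gWFDeriv t) t := by
  have h := (hasDerivAt_id t).mul (hasDerivAt_log_one_add_one_div_sq ht)
  refine h.congr_deriv ?_
  have : t ^ 2 + 1 ≠ 0 := by positivity
  simp only [id, gWFDeriv]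
  field_simp
  ring

lemma hasDerivAt_gWFDeriv {t : ℝ} (ht : t ≠ 0) :
    HasDerivAt gWFDeriv ((2 * t ^ 2 - 2) / (t * (t ^ 2 + 1) ^ 2)) t := by
  have hden : t ^ 2 + 1 ≠ 0 := by positivity
  have hfrac := (hasDerivAt_const t (2 : ℝ)).div ((hasDerivAt_pow 2 t).add_const 1) hden
  refine ((hasDerivAt_log_one_add_one_div_sq ht).sub hfrac).congr_deriv ?_
  field_simp
  ring

lemma gWFDeriv_neg {t : ℝ} (ht : 1 < 2 * t ^ 2) : gWFDeriv t < 0 := by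
  have ht0 : t ≠ 0 := by rintro rfl; norm_num at ht
  set u := 1 / t ^ 2 with hu
  have hu0 : 0 < u := by positivity
  have hu2 : u < 2 := by rw [hu, div_lt_iff₀ (by positivity)]; linarith
  have hlog : log (1 + u) ≤ ((1 + u) - (1 + u)⁻¹) / 2 := log_le_half_sub_inv (by linarith)
  have hfrac : 2 / (t ^ 2 + 1) = 2 * u / (1 + u) := by
    rw [hu]; field_simp
  have key : ((1 + u) - (1 + u)⁻¹) / 2 < 2 * u / (1 + u) := by
    rw [div_lt_div_iff₀ (by norm_num) (by positivity)]
    field_simp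
    nlinarith
  unfold gWFDeriv
  linarith

lemma strictAntiOn_gWF_Ici {a : ℝ} (ha : 0 < a) (h2a : 1 ≤ 2 * a ^ 2) :
    StrictAntiOn gWF (Ici a) := by
  refine strictAntiOn_of_deriv_neg (convex_Ici a)
    (fun t ht => (hasDerivAt_gWF (ha.trans_le ht).ne').continuousAt.continuousWithinAt) ?_
  intro t ht
  rw [interior_Ici] at ht
  rw [(hasDerivAt_gWF (ha.trans ht).ne').deriv]
  exact gWFDeriv_neg (by nlinarith [mem_Ioi.1 ht])

lemma concaveOn_gWF_Ioc : ConcaveOn ℝ (Ioc 0 1) gWF := by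
  refine concaveOn_of_hasDerivWithinAt2_nonpos (f' := gWFDeriv)
    (f'' := fun t => (2 * t ^ 2 - 2) / (t * (t ^ 2 + 1) ^ 2)) (convex_Ioc 0 1)
    (fun t ht => (hasDerivAt_gWF ht.1.ne').continuousAt.continuousWithinAt) ?_ ?_ ?_ <;>
    rw [interior_Ioc]
  · exact fun t ht => (hasDerivAt_gWF ht.1.ne').hasDerivWithinAt
  · exact fun t ht => (hasDerivAt_gWFDeriv ht.1.ne').hasDerivWithinAt
  · intro t ⟨ht0, ht1⟩
    have : t ^ 2 < 1 := by nlinarith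
    exact div_nonpos_of_nonpos_of_nonneg (by linarith) (by positivity)

lemma gWF_three_quarters_le_one_half : gWF (3 / 4) ≤ gWF (1 / 2) := by
  have h := log_le_log (by norm_num) (show (25 / 9 : ℝ) ^ 3 ≤ 5 ^ 2 by norm_num)
  rw [log_pow, log_pow] at h
  norm_num [gWF]
  linarith

lemma gWF_le_of_one_half_le_of_le {s t : ℝ} (hs : 1 / 2 ≤ s) (hst : s ≤ t) (ht : 3 / 4 ≤ t) :
    gWF t ≤ gWF s := by
  have hanti := strictAntiOn_gWF_Ici (a := 3 / 4) (by norm_num) (by norm_num)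
  rcases le_or_gt (3 / 4) s with hs' | hs'
  · exact hanti.antitoneOn hs' (hs'.trans hst) hst
  · have hconc : min (gWF (1 / 2)) (gWF (3 / 4)) ≤ gWF s :=
      concaveOn_gWF_Ioc.min_le_of_mem_Icc (by norm_num) (by norm_num) ⟨hs, hs'.le⟩
    rw [min_eq_right gWF_three_quarters_le_one_half] at hconc
    exact (hanti.antitoneOn self_mem_Ici ht ht).trans hconc

/-- For every `x ≥ 1`, `g(x/2) ≥ g(3x/4) ≥ g(x)`, and `g` is
strictly decreasing on the interval `[3x/4, x]`. -/
theorem stmt_13 (x : ℝ) (hx : 1 ≤ x) :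
    gWF (x / 2) ≥ gWF (3 * x / 4) ∧ gWF (3 * x / 4) ≥ gWF x ∧
    StrictAntiOn gWF (Set.Icc (3 * x / 4) x) := by
  have hanti : StrictAntiOn gWF (Ici (3 * x / 4)) :=
    strictAntiOn_gWF_Ici (by linarith) (by nlinarith)
  refine ⟨gWF_le_of_one_half_le_of_le (by linarith) (by linarith) (by linarith), ?_, ?_⟩
  · exact (hanti self_mem_Ici (mem_Ici.2 (by linarith)) (by linarith)).le
  · exact hanti.mono Icc_subset_Ici_self
end

section
/- (Critical points of the two-level allocation.) Let γ > 0 and let n₁, n₂ be positive real numbers. Define f : [0,1] → ℝ by f(λ) = n₁·log(1 + γλ²/n₁²) + n₂·log(1 + γ(1−λ)²/n₂²). If λ ∈ (0,1) satisfies f′(λ) = 0, then either λ = n₁/(n₁ + n₂), or else γ ≥ 4n₁n₂ and λ = (1 + √(1 − 4n₁n₂/γ))/2 or λ = (1 − √(1 − 4n₁n₂/γ))/2. Consequently, every maximizer of f on [0,1] lies in the set {0, 1, n₁/(n₁+n₂)} ∪ {(1 ± √(1 − 4n₁n₂/γ))/2}. -/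
/-!
Clearing the positive denominators in `f′(λ) = 0` factors it as
`(λ(n₁ + n₂) − n₁)(n₁n₂ − γλ(1 − λ)) = 0`, and the second factor vanishes exactly when
`(2λ − 1)² = 1 − 4n₁n₂/γ`. An interior maximizer is a local maximum, hence a critical point.
-/

open Real Set

lemma hasDerivAt_mul_log_one_add_mul_sq_div {γ : ℝ} (hγ : 0 ≤ γ) {n : ℝ} (hn : n ≠ 0) (t : ℝ) :
    HasDerivAt (fun t => n * log (1 + γ * t ^ 2 / n ^ 2))
      (2 * γ * n * t / (n ^ 2 + γ * t ^ 2)) t := by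
  have hpos : 0 < 1 + γ * t ^ 2 / n ^ 2 := by positivity
  have hinner : HasDerivAt (fun t => 1 + γ * t ^ 2 / n ^ 2) (γ * (2 * t) / n ^ 2) t := by
    simpa using (((hasDerivAt_pow 2 t).const_mul γ).div_const (n ^ 2)).const_add 1
  refine (((hasDerivAt_log hpos.ne').comp t hinner).const_mul n).congr_deriv ?_
  field_simp

noncomputable def twoLevelObjective (γ n₁ n₂ : ℝ) (lam : ℝ) : ℝ :=
  n₁ * log (1 + γ * lam ^ 2 / n₁ ^ 2) + n₂ * log (1 + γ * (1 - lam) ^ 2 / n₂ ^ 2)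

lemma hasDerivAt_twoLevelObjective {γ n₁ n₂ : ℝ} (hγ : 0 ≤ γ) (h₁ : n₁ ≠ 0) (h₂ : n₂ ≠ 0)
    (lam : ℝ) :
    HasDerivAt (twoLevelObjective γ n₁ n₂)
      (2 * γ * n₁ * lam / (n₁ ^ 2 + γ * lam ^ 2)
        - 2 * γ * n₂ * (1 - lam) / (n₂ ^ 2 + γ * (1 - lam) ^ 2)) lam := by
  have h₂' := (hasDerivAt_mul_log_one_add_mul_sq_div hγ h₂ (1 - lam)).comp lam
    ((hasDerivAt_id lam).const_sub 1)
  exact ((hasDerivAt_mul_log_one_add_mul_sq_div hγ h₁ lam).add h₂').congr_deriv (by ring)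

lemma twoLevelObjective_deriv_eq_zero_iff {γ n₁ n₂ lam : ℝ} (hγ : 0 < γ) (h₁ : n₁ ≠ 0)
    (h₂ : n₂ ≠ 0) (hlam : lam ∈ Ioo 0 1) :
    deriv (twoLevelObjective γ n₁ n₂) lam = 0 ↔
      (lam * (n₁ + n₂) - n₁) * (n₁ * n₂ - γ * lam * (1 - lam)) = 0 := by
  obtain ⟨hl0, hl1⟩ := hlam
  have hd₁ : 0 < n₁ ^ 2 + γ * lam ^ 2 := by positivity
  have hd₂ : 0 < n₂ ^ 2 + γ * (1 - lam) ^ 2 := by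
    have : 0 < 1 - lam := sub_pos.2 hl1
    positivity
  have hfactor : 2 * γ * n₁ * lam * (n₂ ^ 2 + γ * (1 - lam) ^ 2)
      - 2 * γ * n₂ * (1 - lam) * (n₁ ^ 2 + γ * lam ^ 2)
      = 2 * γ * ((lam * (n₁ + n₂) - n₁) * (n₁ * n₂ - γ * lam * (1 - lam))) := by ring
  rw [(hasDerivAt_twoLevelObjective hγ.le h₁ h₂ lam).deriv, sub_eq_zero,
    div_eq_div_iff hd₁.ne' hd₂.ne', ← sub_eq_zero, hfactor, mul_eq_zero,
    or_iff_right (by positivity)]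

lemma eq_one_add_sqrt_or_eq_one_sub_sqrt_of_mul_mul_one_sub_eq {γ c lam : ℝ} (hγ : 0 < γ)
    (h : γ * lam * (1 - lam) = c) :
    4 * c ≤ γ ∧ (lam = (1 + √(1 - 4 * c / γ)) / 2 ∨ lam = (1 - √(1 - 4 * c / γ)) / 2) := by
  have hdisc : 1 - 4 * c / γ = (2 * lam - 1) ^ 2 := by
    field_simp
    linear_combination 4 * h
  refine ⟨?_, ?_⟩
  · nlinarith [sq_nonneg (2 * lam - 1)]
  · rw [hdisc, sqrt_sq_eq_abs]
    rcases le_or_gt 0 (2 * lam - 1) with h' | h'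
    · left; rw [abs_of_nonneg h']; ring
    · right; rw [abs_of_neg h']; ring

lemma twoLevelObjective_critical_point {γ n₁ n₂ lam : ℝ} (hγ : 0 < γ) (h₁ : 0 < n₁) (h₂ : 0 < n₂)
    (hlam : lam ∈ Ioo 0 1) (hcrit : deriv (twoLevelObjective γ n₁ n₂) lam = 0) :
    lam = n₁ / (n₁ + n₂) ∨
      (4 * n₁ * n₂ ≤ γ ∧
        (lam = (1 + √(1 - 4 * n₁ * n₂ / γ)) / 2 ∨ lam = (1 - √(1 - 4 * n₁ * n₂ / γ)) / 2)) := by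
  rcases mul_eq_zero.1 ((twoLevelObjective_deriv_eq_zero_iff hγ h₁.ne' h₂.ne' hlam).1 hcrit)
    with hlin | hquad
  · left
    rw [eq_div_iff (by positivity)]
    linarith
  · right
    rw [mul_assoc 4]
    exact eq_one_add_sqrt_or_eq_one_sub_sqrt_of_mul_mul_one_sub_eq hγ (by linarith)

/-- Critical points of the two-level allocation objective
`f λ = n₁ log (1 + γλ²/n₁²) + n₂ log (1 + γ(1−λ)²/n₂²)`: every interior
critical point is `n₁/(n₁+n₂)` or (when `γ ≥ 4n₁n₂`) one of
`(1 ± √(1 − 4n₁n₂/γ))/2`; hence every maximizer on `[0,1]` lies in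
`{0, 1, n₁/(n₁+n₂), (1 ± √(1 − 4n₁n₂/γ))/2}`. -/
theorem stmt_16 (γ : ℝ) (hγ : 0 < γ) (n₁ n₂ : ℝ) (h₁ : 0 < n₁) (h₂ : 0 < n₂) :
    let f : ℝ → ℝ := fun lam =>
      n₁ * Real.log (1 + γ * lam ^ 2 / n₁ ^ 2)
        + n₂ * Real.log (1 + γ * (1 - lam) ^ 2 / n₂ ^ 2)
    (∀ lam ∈ Set.Ioo (0 : ℝ) 1, deriv f lam = 0 →
      lam = n₁ / (n₁ + n₂) ∨
      (4 * n₁ * n₂ ≤ γ ∧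
        (lam = (1 + Real.sqrt (1 - 4 * n₁ * n₂ / γ)) / 2 ∨
         lam = (1 - Real.sqrt (1 - 4 * n₁ * n₂ / γ)) / 2))) ∧
    ∀ lam ∈ Set.Icc (0 : ℝ) 1, (∀ μ ∈ Set.Icc (0 : ℝ) 1, f μ ≤ f lam) →
      lam = 0 ∨ lam = 1 ∨ lam = n₁ / (n₁ + n₂) ∨
      lam = (1 + Real.sqrt (1 - 4 * n₁ * n₂ / γ)) / 2 ∨
      lam = (1 - Real.sqrt (1 - 4 * n₁ * n₂ / γ)) / 2 := by
  intro f
  refine ⟨fun lam hlam hcrit => twoLevelObjective_critical_point hγ h₁ h₂ hlam hcrit,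
    fun lam hlam hmax => ?_⟩
  rcases hlam.1.eq_or_lt with rfl | h0
  · exact Or.inl rfl
  rcases hlam.2.eq_or_lt with rfl | h1
  · exact Or.inr (Or.inl rfl)
  have hloc : IsLocalMax f lam :=
    (show IsMaxOn f (Icc 0 1) lam from hmax).isLocalMax (Icc_mem_nhds h0 h1)
  rcases twoLevelObjective_critical_point hγ h₁ h₂ ⟨h0, h1⟩ hloc.deriv_eq_zero
    with h | ⟨-, h | h⟩ <;> simp [h]
end
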